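/- Every 0-1 matrix admitting a 1D voter-candidate interval explanation is linearly consistent: if there are closed real intervals I_i for rows and J_c for columns with A[i][c] = 1 iff I_i ∩ J_c ≠ ∅, then there exists a linear order ≻ on rows and columns (e.g., by increasing left endpoint) such that for all rows i ≻ j and columns a ≻ b, A[i][b] = 1 and A[j][a] = 1 imply A[i][a] = 1. -/

import Mathlib

/-!
Order rows and columns by the left endpoints of their intervals, breaking ties arbitrarily.
If row `i` precedes row `j` and column `a` precedes column `b`, take a point `x` common to
`I_i` and `J_b` and a point `y` common to `I_j` and `J_a`; then `min x y` lies in both `I_i`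
and `J_a`, because the left endpoints of `I_i` and `J_a` are the smaller ones.
-/

/-- The linear-consistency condition for a given strict order `r` (where `r x y` means
`x ≻ y`) on the disjoint union of rows and columns. -/
def LCCond {n m : ℕ} (A : Fin n → Fin m → Bool)
    (r : (Fin n ⊕ Fin m) → (Fin n ⊕ Fin m) → Prop) : Prop :=
  ∀ (i j : Fin n) (a b : Fin m), r (Sum.inl i) (Sum.inl j) → r (Sum.inr a) (Sum.inr b) →
    A i b = true → A j a = true → A i a = true

open Set

theorem Set.Icc_inter_Icc_nonempty_of_le {α : Type*} [SemilatticeInf α]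
    {a₁ b₁ c₁ d₁ a₂ b₂ c₂ d₂ : α} (ha : a₁ ≤ a₂) (hc : c₁ ≤ c₂)
    (h₁ : (Icc a₁ b₁ ∩ Icc c₂ d₂).Nonempty) (h₂ : (Icc a₂ b₂ ∩ Icc c₁ d₁).Nonempty) :
    (Icc a₁ b₁ ∩ Icc c₁ d₁).Nonempty := by
  obtain ⟨x, ⟨hax, hxb⟩, hcx, -⟩ := h₁
  obtain ⟨y, ⟨hay, -⟩, hcy, hyd⟩ := h₂
  exact ⟨x ⊓ y, ⟨le_inf hax (ha.trans hay), inf_le_left.trans hxb⟩,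
    ⟨le_inf (hc.trans hcx) hcy, inf_le_right.trans hyd⟩⟩

theorem exists_isStrictTotalOrder_le_of_rel {α β : Type*} [LinearOrder β] (key : α → β) :
    ∃ r : α → α → Prop, IsStrictTotalOrder α r ∧ ∀ x y, r x y → key x ≤ key y := by
  let _ : LinearOrder α := IsWellOrder.linearOrder WellOrderingRel
  let f : α → β ×ₗ α := fun x => toLex (key x, x)
  have hf : Function.Injective f := fun x y h => congrArg Prod.snd (toLex.injective h)
  exact ⟨InvImage (· < ·) f, (RelEmbedding.preimage ⟨f, hf⟩ (· < ·)).isStrictTotalOrder,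
    fun x y hxy => Prod.Lex.monotone_fst_ofLex hxy.le⟩

theorem vci_implies_lc_general {n m : ℕ} (A : Fin n → Fin m → Bool)
    (vl vr : Fin n → ℝ) (cl cr : Fin m → ℝ)
    (hA : ∀ i j, A i j = true ↔ (Set.Icc (vl i) (vr i) ∩ Set.Icc (cl j) (cr j)).Nonempty) :
    ∃ r : (Fin n ⊕ Fin m) → (Fin n ⊕ Fin m) → Prop,
      IsStrictTotalOrder _ r ∧ LCCond A r := by
  obtain ⟨r, hr, hkey⟩ := exists_isStrictTotalOrder_le_of_rel (Sum.elim vl cl)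
  refine ⟨r, hr, fun i j a b hij hab hib hja => ?_⟩
  rw [hA] at hib hja ⊢
  exact Icc_inter_Icc_nonempty_of_le (hkey _ _ hij) (hkey _ _ hab) hib hja

/-- Every matrix with a 1D voter-candidate interval explanation is linearly consistent. -/
theorem vci_implies_lc {n m : ℕ} (A : Fin n → Fin m → Bool)
    (vl vr : Fin n → ℝ) (cl cr : Fin m → ℝ)
    (hv : ∀ i, vl i ≤ vr i) (hc : ∀ j, cl j ≤ cr j)
    (hA : ∀ i j, A i j = true ↔ (Set.Icc (vl i) (vr i) ∩ Set.Icc (cl j) (cr j)).Nonempty) :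
    ∃ r : (Fin n ⊕ Fin m) → (Fin n ⊕ Fin m) → Prop,
      IsStrictTotalOrder _ r ∧ LCCond A r :=
  vci_implies_lc_general A vl vr cl cr hA
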